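/- Failure of stationarity: for every field K and every K-bilinear space C, there is a K-bilinear space V extending C containing vectors a, a', b such that a, a', b are linearly independent over C, there is a bilinear automorphism-style identification giving a and a' the same Galois type over C (i.e. there exist bilinear monomorphisms from V into a common bilinear space agreeing on C and sending a to a'), yet [a, b] = 0 while [a', b] = 1, so no pair of bilinear monomorphisms agreeing on C ∪ {b} can identify a with a'. -/

import Mathlib

/-!
Take `V = C ⊕ K³`, orthogonal sum of `C` with the space on `e₀, e₁, e₂` whose only nonzero
pairing is `[e₁, e₂] = 1`, and `a = e₀`, `a' = e₁`, `b = e₂`. Both `V`-copies embed in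
`W = C ⊕ K⁴`, where `[f₁, f₂] = [f₀, f₃] = 1`: by `g : eᵢ ↦ fᵢ` and by
`h : e₀ ↦ f₁, e₁ ↦ f₀, e₂ ↦ f₃`, both the identity on `C`, and `g a = f₀ = h a'`. Isometries
agreeing on `b` and sending `a` and `a'` to the same point force `[a, b] = [a', b]`.
-/

open LinearMap Finsupp

namespace StationarityFailure

section OrthogonalSum

variable {R M N : Type*} [CommSemiring R] [AddCommMonoid M] [Module R M]
  [AddCommMonoid N] [Module R N]

def orthogonalSum (B₁ : M →ₗ[R] M →ₗ[R] R) (B₂ : N →ₗ[R] N →ₗ[R] R) :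
    M × N →ₗ[R] M × N →ₗ[R] R :=
  B₁.compl₁₂ (fst R M N) (fst R M N) + B₂.compl₁₂ (snd R M N) (snd R M N)

variable (B₁ : M →ₗ[R] M →ₗ[R] R) (B₂ : N →ₗ[R] N →ₗ[R] R)

@[simp]
lemma orthogonalSum_apply (p q : M × N) :
    orthogonalSum B₁ B₂ p q = B₁ p.1 q.1 + B₂ p.2 q.2 := rfl

lemma orthogonalSum_prodMap_id {N' : Type*} [AddCommMonoid N'] [Module R N']
    {B₂' : N' →ₗ[R] N' →ₗ[R] R} {f : N →ₗ[R] N'}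
    (hf : ∀ x y, B₂' (f x) (f y) = B₂ x y) (p q : M × N) :
    orthogonalSum B₁ B₂' (prodMap id f p) (prodMap id f q) = orthogonalSum B₁ B₂ p q := by
  simp [hf]

lemma span_inf_range_inl_eq_bot {s : Set (M × N)} (hs : s ⊆ range (inr R M N)) :
    Submodule.span R s ⊓ range (inl R M N) = ⊥ :=
  disjoint_iff.mp (disjoint_inl_inr.symm.mono_left (Submodule.span_le.mpr hs))

end OrthogonalSum

lemma apply_eq_of_isometries_agree {R V W : Type*} [CommSemiring R] [AddCommMonoid V] [Module R V]
    [AddCommMonoid W] [Module R W] {BV : V →ₗ[R] V →ₗ[R] R} {BW : W →ₗ[R] W →ₗ[R] R}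
    {g h : V →ₗ[R] W} (hg : ∀ x y, BW (g x) (g y) = BV x y) (hh : ∀ x y, BW (h x) (h y) = BV x y)
    {a a' b : V} (hb : g b = h b) (ha : g a = h a') : BV a b = BV a' b := by
  rw [← hg, ← hh, ha, hb]

section Coordinates

variable {R ι κ : Type*} [CommSemiring R]

noncomputable def coordPairing (i j : ι) : (ι →₀ R) →ₗ[R] (ι →₀ R) →ₗ[R] R :=
  (mul R R).compl₁₂ (lapply i) (lapply j)

@[simp]
lemma coordPairing_apply (i j : ι) (u v : ι →₀ R) : coordPairing i j u v = u i * v j := rfl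

lemma coordPairing_mapDomain {s : ι → κ} (hs : Function.Injective s) (i j : ι) (u v : ι →₀ R) :
    coordPairing (s i) (s j) (mapDomain s u) (mapDomain s v) = coordPairing i j u v := by
  simp [mapDomain_apply hs]

lemma coordPairing_mapDomain_of_ne {s : ι → κ} (i : κ) {j : κ} (hj : ∀ k, s k ≠ j) (u v : ι →₀ R) :
    coordPairing i j (mapDomain s u) (mapDomain s v) = 0 := by
  simp [mapDomain_of_notMem_range, hj]

lemma prodMap_id_lmapDomain_injective {M : Type*} [AddCommMonoid M] [Module R M] {s : ι → κ}
    (hs : Function.Injective s) :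
    Function.Injective (prodMap (id : M →ₗ[R] M) (lmapDomain R R s)) := by
  rw [coe_prodMap]
  exact Function.injective_id.prodMap (mapDomain_injective hs)

end Coordinates

variable (K : Type*) [Field K]

noncomputable abbrev β₃ : (Fin 3 →₀ K) →ₗ[K] (Fin 3 →₀ K) →ₗ[K] K := coordPairing 1 2

noncomputable abbrev β₄ : (Fin 4 →₀ K) →ₗ[K] (Fin 4 →₀ K) →ₗ[K] K :=
  coordPairing 1 2 + coordPairing 0 3

def swapIndex : Fin 3 → Fin 4 := ![1, 0, 3]

lemma swapIndex_injective : Function.Injective swapIndex := by decide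

lemma β₄_mapDomain_castSucc (u v : Fin 3 →₀ K) :
    β₄ K (lmapDomain K K Fin.castSucc u) (lmapDomain K K Fin.castSucc v) = β₃ K u v := by
  rw [show β₄ K = coordPairing (Fin.castSucc 1) (Fin.castSucc 2) +
    coordPairing (Fin.castSucc 0) (Fin.last 3) from rfl]
  simp only [LinearMap.add_apply, lmapDomain_apply,
    coordPairing_mapDomain (Fin.castSucc_injective 3),
    coordPairing_mapDomain_of_ne _ Fin.castSucc_ne_last, add_zero]

lemma β₄_mapDomain_swapIndex (u v : Fin 3 →₀ K) :
    β₄ K (lmapDomain K K swapIndex u) (lmapDomain K K swapIndex v) = β₃ K u v := by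
  rw [show β₄ K = coordPairing (swapIndex 0) 2 + coordPairing (swapIndex 1) (swapIndex 2) from rfl]
  simp only [LinearMap.add_apply, lmapDomain_apply, coordPairing_mapDomain swapIndex_injective,
    coordPairing_mapDomain_of_ne _ (by decide : ∀ k, swapIndex k ≠ 2), zero_add]

end StationarityFailure

open StationarityFailure

theorem stationarity_fails {K : Type u} [Field K] (C : Type u) [AddCommGroup C] [Module K C]
    (BC : C →ₗ[K] C →ₗ[K] K) :
    ∃ (V : Type u) (_ : AddCommGroup V) (_ : Module K V)
      (BV : V →ₗ[K] V →ₗ[K] K) (ι : C →ₗ[K] V) (a a' b : V),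
      Function.Injective ι ∧ (∀ x y : C, BV (ι x) (ι y) = BC x y) ∧
      LinearIndependent K ![a, a', b] ∧
      Submodule.span K {a, a', b} ⊓ LinearMap.range ι = ⊥ ∧
      BV a b = 0 ∧ BV a' b = 1 ∧
      (∃ (W : Type u) (_ : AddCommGroup W) (_ : Module K W)
        (BW : W →ₗ[K] W →ₗ[K] K) (g h : V →ₗ[K] W),
        Function.Injective g ∧ (∀ x y : V, BW (g x) (g y) = BV x y) ∧
        Function.Injective h ∧ (∀ x y : V, BW (h x) (h y) = BV x y) ∧
        g ∘ₗ ι = h ∘ₗ ι ∧ g a = h a') ∧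
      ¬ (∃ (W : Type u) (_ : AddCommGroup W) (_ : Module K W)
        (BW : W →ₗ[K] W →ₗ[K] K) (g h : V →ₗ[K] W),
        Function.Injective g ∧ (∀ x y : V, BW (g x) (g y) = BV x y) ∧
        Function.Injective h ∧ (∀ x y : V, BW (h x) (h y) = BV x y) ∧
        g ∘ₗ ι = h ∘ₗ ι ∧ g b = h b ∧ g a = h a') := by
  let e : Fin 3 → C × (Fin 3 →₀ K) := fun i => inr K C _ (single i 1)
  refine ⟨C × (Fin 3 →₀ K), inferInstance, inferInstance, orthogonalSum BC (β₃ K), inl K C _,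
    e 0, e 1, e 2, inl_injective, fun x y => by simp, ?_, ?_, by simp [e], by simp [e], ?_, ?_⟩
  · have he : ![e 0, e 1, e 2] = e := by
      ext i : 1
      fin_cases i <;> rfl
    rw [he]
    exact (linearIndependent_single_one K (Fin 3)).map' _ Submodule.ker_inr
  · exact span_inf_range_inl_eq_bot (by rintro _ (rfl | rfl | rfl) <;> exact mem_range_self _ _)
  · refine ⟨C × (Fin 4 →₀ K), inferInstance, inferInstance, orthogonalSum BC (β₄ K),
      prodMap id (lmapDomain K K Fin.castSucc), prodMap id (lmapDomain K K swapIndex),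
      prodMap_id_lmapDomain_injective (Fin.castSucc_injective 3),
      orthogonalSum_prodMap_id BC (β₃ K) (β₄_mapDomain_castSucc K),
      prodMap_id_lmapDomain_injective swapIndex_injective,
      orthogonalSum_prodMap_id BC (β₃ K) (β₄_mapDomain_swapIndex K), ?_, ?_⟩
    · ext x <;> simp
    · simp [e, swapIndex]
  · rintro ⟨W, _, _, BW, g, h, -, hg, -, hh, -, hb, ha⟩
    simpa [e] using apply_eq_of_isometries_agree hg hh hb ha
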